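/- arXiv:2506.19562 — 2 statements merged into one kernel-verified Lean document; each statement's English description precedes it below -/
import Mathlib

section
/- For every real x > 1 and every t > 0, d_ℍ(x, 1) < d_ℍ(x, 1 + it); consequently, the hyperbolic projection of x onto the vertical ray γ(t) = 1 + it, t ≥ 0, is the point 1. In particular, for f(z) = 2z the projections of the orbit points f^n(1) = 2^n onto γ are all equal to 1, so the sequence of projections of a hyperbolic orbit onto a curve landing at ∞ with arg γ(t) → π/2 can be constant. -/
open Complex Filter Topology

/-- Pseudo-hyperbolic distance on the right half-plane ℍ = {Re z > 0}. -/
noncomputable def rhoH (z w : ℂ) : ℝ := ‖(z - w) / (z + (starRingEnd ℂ) w)‖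

/-- Hyperbolic distance on the right half-plane. -/
noncomputable def dH (z w : ℂ) : ℝ := (1/2) * Real.log ((1 + rhoH z w) / (1 - rhoH z w))

/-- `p` is a hyperbolic projection of `z` onto the curve `γ : [0,∞) → ℍ`. -/
def IsProjH (γ : ℝ → ℂ) (z p : ℂ) : Prop :=
  (∃ t ≥ (0:ℝ), p = γ t) ∧ ∀ t ≥ (0:ℝ), dH z p ≤ dH z (γ t)

/-- `f` is a hyperbolic holomorphic self-map of the right half-plane with
Denjoy–Wolff point ∞: it preserves ℍ, is holomorphic on ℍ, its iterates tend to ∞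
uniformly on compact subsets of ℍ, and `f(z)/z → c` for some `c > 1` as `z → ∞`
within every sector `{|arg z| < φ}`, `φ ∈ (0, π/2)`. -/
def HyperbolicAtInf (f : ℂ → ℂ) : Prop :=
  (∀ z : ℂ, 0 < z.re → 0 < (f z).re) ∧
  DifferentiableOn ℂ f {z : ℂ | 0 < z.re} ∧
  (∀ K : Set ℂ, K ⊆ {z : ℂ | 0 < z.re} → IsCompact K →
    ∀ M : ℝ, ∃ N : ℕ, ∀ n ≥ N, ∀ z ∈ K, M < ‖f^[n] z‖) ∧
  (∃ c : ℝ, 1 < c ∧ ∀ φ ∈ Set.Ioo (0:ℝ) (Real.pi/2), ∀ ε > (0:ℝ), ∃ R : ℝ,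
    ∀ z : ℂ, 0 < z.re → |z.arg| < φ → R < ‖z‖ →
      ‖f z / z - (c:ℂ)‖ < ε)

/-!
Since `|z + w̄|² = |z - w|² + 4 Re z Re w`, the pseudo-hyperbolic distance satisfies
`ρ(z, w)² = |z - w|² / (|z - w|² + 4 Re z Re w)`. On the horocycle `Re w = 1` the last term is
fixed, so `d_ℍ(z, w)` is a strictly increasing function of the Euclidean distance `|z - w|`,
and for real `x > 0` that distance is smallest at `w = 1`. The orbit `2ⁿ` of `1` is real.
-/

lemma normSq_add_conj_eq (z w : ℂ) :
    normSq (z + starRingEnd ℂ w) = normSq (z - w) + 4 * z.re * w.re := by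
  simp only [normSq_apply, add_re, add_im, sub_re, sub_im, conj_re, conj_im]
  ring

lemma rhoH_nonneg (z w : ℂ) : 0 ≤ rhoH z w := norm_nonneg _

lemma rhoH_sq (z w : ℂ) :
    rhoH z w ^ 2 = normSq (z - w) / (normSq (z - w) + 4 * z.re * w.re) := by
  rw [rhoH, norm_div, div_pow, Complex.sq_norm, Complex.sq_norm, normSq_add_conj_eq]

lemma rhoH_lt_one {z w : ℂ} (hz : 0 < z.re) (hw : 0 < w.re) : rhoH z w < 1 := by
  have hc : 0 < 4 * z.re * w.re := by positivity
  have hsq : rhoH z w ^ 2 < 1 := by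
    rw [rhoH_sq, div_lt_one (add_pos_of_nonneg_of_pos (normSq_nonneg _) hc)]
    linarith
  exact (sq_lt_one_iff₀ (rhoH_nonneg z w)).1 hsq

lemma rhoH_lt_rhoH_of_norm_sub_lt {z w w' : ℂ} (hz : 0 < z.re) (hw : 0 < w.re)
    (hre : w.re = w'.re) (h : ‖z - w‖ < ‖z - w'‖) : rhoH z w < rhoH z w' := by
  have hc : 0 < 4 * z.re * w.re := by positivity
  have hsq : normSq (z - w) < normSq (z - w') := by
    rw [← Complex.sq_norm, ← Complex.sq_norm]
    exact pow_lt_pow_left₀ h (norm_nonneg _) two_ne_zero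
  have : rhoH z w ^ 2 < rhoH z w' ^ 2 := by
    rw [rhoH_sq, rhoH_sq, ← hre, div_lt_div_iff₀ (add_pos_of_nonneg_of_pos (normSq_nonneg _) hc)
      (add_pos_of_nonneg_of_pos (normSq_nonneg _) hc)]
    nlinarith
  exact (pow_lt_pow_iff_left₀ (rhoH_nonneg z w) (rhoH_nonneg z w') two_ne_zero).1 this

lemma dH_eq_artanh {z w : ℂ} (h : rhoH z w ≤ 1) : dH z w = Real.artanh (rhoH z w) := by
  rw [dH, Real.artanh_eq_half_log ⟨by linarith [rhoH_nonneg z w], h⟩]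

lemma dH_lt_dH_of_norm_sub_lt {z w w' : ℂ} (hz : 0 < z.re) (hw : 0 < w.re)
    (hre : w.re = w'.re) (h : ‖z - w‖ < ‖z - w'‖) : dH z w < dH z w' := by
  have hlt := rhoH_lt_rhoH_of_norm_sub_lt hz hw hre h
  have hlt' := rhoH_lt_one hz (hre ▸ hw)
  rw [dH_eq_artanh (hlt.trans hlt').le, dH_eq_artanh hlt'.le]
  exact Real.artanh_lt_artanh (by linarith [rhoH_nonneg z w]) hlt' hlt

lemma dH_ofReal_one_lt {x t : ℝ} (hx : 0 < x) (ht : t ≠ 0) :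
    dH (x : ℂ) 1 < dH (x : ℂ) (1 + (t : ℂ) * I) := by
  refine dH_lt_dH_of_norm_sub_lt (by simpa) (by simp) (by simp) ?_
  rw [← sq_lt_sq₀ (norm_nonneg _) (norm_nonneg _), Complex.sq_norm, Complex.sq_norm]
  simpa [normSq_apply] using ht

lemma isProjH_one_add_mul_I {x : ℝ} (hx : 0 < x) :
    IsProjH (fun t : ℝ => 1 + (t : ℂ) * I) (x : ℂ) 1 := by
  refine ⟨⟨0, le_rfl, by simp⟩, fun t ht => ?_⟩
  rcases ht.eq_or_lt with rfl | ht
  · simp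
  · exact (dH_ofReal_one_lt hx ht.ne').le

/-- for x > 1 and t > 0 we have d_ℍ(x, 1) < d_ℍ(x, 1 + it); hence the
projection of x onto the vertical ray γ(t) = 1 + it is the point 1, and in
particular the projections of the orbit (2z)^{∘n}(1) = 2ⁿ onto γ are all 1, so the
sequence of projections of a hyperbolic orbit onto a curve landing at ∞ with
arg γ(t) → π/2 can be constant. -/
theorem stmt16 :
    (∀ x : ℝ, 1 < x → ∀ t : ℝ, 0 < t →
        dH ((x : ℂ)) 1 < dH ((x : ℂ)) (1 + (t : ℂ) * I)) ∧
    (∀ x : ℝ, 1 < x → IsProjH (fun t : ℝ => 1 + (t : ℂ) * I) ((x : ℂ)) 1) ∧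
    (∀ n : ℕ, IsProjH (fun t : ℝ => 1 + (t : ℂ) * I) ((fun z : ℂ => 2 * z)^[n] 1) 1) := by
  refine ⟨fun x hx t ht => dH_ofReal_one_lt (by linarith) ht.ne',
    fun x hx => isProjH_one_add_mul_I (by linarith), fun n => ?_⟩
  have horbit : (fun z : ℂ => 2 * z)^[n] 1 = ((2 ^ n : ℝ) : ℂ) := by
    simp [mul_left_iterate]
  rw [horbit]
  exact isProjH_one_add_mul_I (by positivity)
end

section
/- Let f : ℍ → ℍ be the parabolic map f(z) = z + 1, whose Denjoy–Wolff point is ∞. There exist a continuous curve γ : [0,∞) → ℍ landing at ∞ with arg(γ(t)) → 0 as t → ∞, and for each n ∈ ℕ a projection π_n of f^n(1) onto γ, such that the sequence {d_ℍ(1, π_n)} is not eventually strictly increasing; in fact π_{3n−2} = π_{3n−1} for all n ∈ ℕ. Hence the strict monotonicity of projections fails for parabolic self-maps of ℍ. -/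
open Complex Filter Topology

/-!
The curve runs along the real axis, except that for each `q` it leaves the axis at `3q+1`, climbs
vertically to the ray from `0` tangent to the hyperbolic disc about `3q+2` whose boundary passes
through `3q+3`, follows that ray, and comes straight down to `3q+3`. It therefore avoids this disc,
so `3q+3` is a projection of `3q+2 = f^{3q+1}(1)` as well as of `3q+3 = f^{3q+2}(1)`; the points
`3q+1 = f^{3q}(1)` lie on the curve and are their own projections. The tangent slopes tend to `0`,
which forces `arg γ(t) → 0`.
-/

section Hyperbolic

lemma norm_add_conj_pos {z w : ℂ} (hz : 0 < z.re) (hw : 0 ≤ w.re) :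
    0 < ‖z + (starRingEnd ℂ) w‖ := by
  refine norm_pos_iff.2 fun h => ?_
  have := congrArg Complex.re h
  simp only [add_re, conj_re, zero_re] at this
  linarith

lemma rhoH_self (z : ℂ) : rhoH z z = 0 := by simp [rhoH]

lemma dH_le_dH_of_rhoH_le {z p w : ℂ} (h : rhoH z p ≤ rhoH z w) (hw : rhoH z w < 1) :
    dH z p ≤ dH z w := by
  have hp0 : 0 ≤ rhoH z p := norm_nonneg _
  have hp1 : rhoH z p < 1 := h.trans_lt hw
  unfold dH
  gcongr ?_ * Real.log ?_
  rw [div_le_div_iff₀ (by linarith) (by linarith)]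
  nlinarith

/-- For real `0 < a`, `0 < Q`, the hyperbolic disc about `a` through `Q` is
`{w | (w.re - Q) * (w.re * Q - a ^ 2) + Q * w.im ^ 2 < 0}`, the Euclidean disc on `[a²/Q, Q]`. -/
lemma rhoH_ofReal_le_rhoH {a Q : ℝ} {w : ℂ} (ha : 0 < a) (hQ : 0 < Q) (hw : 0 ≤ w.re)
    (h : 0 ≤ (w.re - Q) * (w.re * Q - a ^ 2) + Q * w.im ^ 2) : rhoH a Q ≤ rhoH a w := by
  have ha' : 0 < (a : ℂ).re := by simpa using ha
  have hdQ := norm_add_conj_pos ha' (w := Q) (by simpa using hQ.le)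
  have hdw := norm_add_conj_pos ha' hw
  rw [rhoH, rhoH, norm_div, norm_div, div_le_div_iff₀ hdQ hdw,
    ← sq_le_sq₀ (by positivity) (by positivity), mul_pow, mul_pow, Complex.sq_norm,
    Complex.sq_norm, Complex.sq_norm, Complex.sq_norm, normSq_apply, normSq_apply, normSq_apply,
    normSq_apply]
  simp only [sub_re, sub_im, add_re, add_im, conj_re, conj_im, ofReal_re, ofReal_im]
  nlinarith [mul_nonneg ha.le h]

/-- The slope of the ray from `0` tangent to the hyperbolic disc about `a` through `Q`. -/
noncomputable def tangentSlope (a Q : ℝ) : ℝ := (Q ^ 2 - a ^ 2) / (2 * a * Q)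

lemma rhoH_ofReal_le_rhoH_of_im_eq {a Q : ℝ} {w : ℂ} (ha : 0 < a) (hQ : 0 < Q) (hw : 0 ≤ w.re)
    (him : w.im = tangentSlope a Q * w.re) : rhoH a Q ≤ rhoH a w := by
  refine rhoH_ofReal_le_rhoH ha hQ hw ?_
  have key : (w.re - Q) * (w.re * Q - a ^ 2) + Q * w.im ^ 2
      = ((Q ^ 2 + a ^ 2) * w.re - 2 * a ^ 2 * Q) ^ 2 / (4 * a ^ 2 * Q) := by
    rw [him, tangentSlope]
    field_simp
    ring
  rw [key]
  positivity

lemma isProjH_self {γ : ℝ → ℂ} (hγ : ∀ t ≥ (0 : ℝ), 0 < (γ t).re) {t₀ : ℝ} (ht₀ : 0 ≤ t₀) :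
    IsProjH γ (γ t₀) (γ t₀) :=
  ⟨⟨t₀, ht₀, rfl⟩, fun t ht => dH_le_dH_of_rhoH_le (by rw [rhoH_self]; exact norm_nonneg _)
    (rhoH_lt_one (hγ t₀ ht₀) (hγ t ht))⟩

end Hyperbolic

lemma Complex.arg_le_of_im_le_mul_re {z : ℂ} {c : ℝ} (hre : 0 < z.re) (him : 0 ≤ z.im)
    (h : z.im ≤ c * z.re) : arg z ≤ c := by
  have hlt : |arg z| < Real.pi / 2 := abs_arg_lt_pi_div_two_iff.2 (Or.inl hre)
  calc arg z ≤ Real.tan (arg z) := Real.le_tan (arg_nonneg_iff.2 him) (abs_lt.1 hlt).2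
    _ = z.im / z.re := tan_arg z
    _ ≤ c := (div_le_iff₀ hre).2 h

lemma Complex.convex_setOf_im_le_mul_re (c : ℝ) : Convex ℝ {z : ℂ | z.im ≤ c * z.re} := by
  intro x hx y hy a b ha hb _
  simp only [Set.mem_ofPred_eq, add_im, add_re, smul_im, smul_re, smul_eq_mul] at hx hy ⊢
  nlinarith

lemma Complex.convex_setOf_im_eq_mul_re (c : ℝ) : Convex ℝ {z : ℂ | z.im = c * z.re} := by
  intro x hx y hy a b _ _ _
  simp only [Set.mem_ofPred_eq, add_im, add_re, smul_im, smul_re, smul_eq_mul] at hx hy ⊢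
  linear_combination a * hx + b * hy

section PolygonalPath

variable {E : Type*} [AddCommGroup E] [Module ℝ E]

/-- For `t < 0` we have `⌊t⌋₊ = 0`, so the first segment is extended affinely. -/
noncomputable def polygonalPath (V : ℕ → E) (t : ℝ) : E :=
  AffineMap.lineMap (V ⌊t⌋₊) (V (⌊t⌋₊ + 1)) (t - ⌊t⌋₊)

variable (V : ℕ → E)

lemma polygonalPath_natCast (k : ℕ) : polygonalPath V k = V k := by
  simp [polygonalPath]

lemma polygonalPath_eq_lineMap {k : ℕ} {t : ℝ} (h₁ : (k : ℝ) ≤ t) (h₂ : t ≤ k + 1) :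
    polygonalPath V t = AffineMap.lineMap (V k) (V (k + 1)) (t - k) := by
  rcases h₂.lt_or_eq with h₂ | rfl
  · rw [polygonalPath, Nat.floor_eq_on_Ico k t ⟨h₁, h₂⟩]
  · simpa using polygonalPath_natCast V (k + 1)

lemma polygonalPath_of_le_one {t : ℝ} (ht : t ≤ 1) :
    polygonalPath V t = AffineMap.lineMap (V 0) (V 1) t := by
  rcases ht.lt_or_eq with ht | rfl
  · rw [polygonalPath, Nat.floor_eq_zero.2 ht]
    simp
  · simpa using polygonalPath_natCast V 1

lemma polygonalPath_mem_segment {t : ℝ} (ht : 0 ≤ t) :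
    polygonalPath V t ∈ segment ℝ (V ⌊t⌋₊) (V (⌊t⌋₊ + 1)) := by
  rw [segment_eq_image_lineMap]
  exact ⟨_, ⟨sub_nonneg.2 (Nat.floor_le ht), by linarith [Nat.lt_floor_add_one t]⟩, rfl⟩

lemma Convex.polygonalPath_mem {s : Set E} (hs : Convex ℝ s) {t : ℝ} (ht : 0 ≤ t)
    (h₀ : V ⌊t⌋₊ ∈ s) (h₁ : V (⌊t⌋₊ + 1) ∈ s) : polygonalPath V t ∈ s :=
  hs.segment_subset h₀ h₁ (polygonalPath_mem_segment V ht)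

lemma continuous_polygonalPath [TopologicalSpace E] [IsTopologicalAddGroup E]
    [ContinuousSMul ℝ E] : Continuous (polygonalPath V) := by
  have hfin : LocallyFinite fun n : ℤ => Set.Icc (n : ℝ) (n + 1) :=
    locallyFinite_Icc_of_tendsto (tendsto_intCast_atTop_atTop)
      (tendsto_atBot_add_const_right _ _ (tendsto_intCast_atBot_iff.2 tendsto_id))
  refine hfin.continuous (Set.eq_univ_of_forall fun t => Set.mem_iUnion.2
    ⟨⌊t⌋, Int.floor_le t, (Int.lt_floor_add_one t).le⟩) (fun _ => isClosed_Icc) fun n => ?_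
  rcases n with k | m
  · refine ((AffineMap.lineMap_continuous (p := V k) (q := V (k + 1))).comp
      (continuous_sub_right (k : ℝ))).continuousOn.congr fun t ht => ?_
    simpa using polygonalPath_eq_lineMap V (k := k) (by simpa using ht.1) (by simpa using ht.2)
  · refine (AffineMap.lineMap_continuous (p := V 0) (q := V 1)).continuousOn.congr fun t ht => ?_
    have hm : (Int.negSucc m : ℝ) < 0 := by exact_mod_cast Int.negSucc_lt_zero m
    exact polygonalPath_of_le_one V (by linarith [ht.2])

end PolygonalPath

namespace TranslationCounterexample

noncomputable def blockSlope (q : ℕ) : ℝ := tangentSlope (3 * q + 2) (3 * q + 3)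

/- The `q`-th block of vertices `4q, …, 4q+3` is `3q+1`, `(3q+1)(1 + i s)`, `(3q+3)(1 + i s)`,
`3q+3`, where `s = blockSlope q`. -/
def vertexRe (k : ℕ) : ℕ := 3 * (k / 4) + if k % 4 ≤ 1 then 1 else 3

noncomputable def vertexSlope (k : ℕ) : ℝ :=
  if k % 4 = 1 ∨ k % 4 = 2 then blockSlope (k / 4) else 0

noncomputable def vertex (k : ℕ) : ℂ := vertexRe k * (1 + vertexSlope k * I)

noncomputable def curve : ℝ → ℂ := polygonalPath vertex

lemma blockSlope_nonneg (q : ℕ) : 0 ≤ blockSlope q := by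
  unfold blockSlope tangentSlope
  apply div_nonneg <;> nlinarith [(Nat.cast_nonneg q : (0 : ℝ) ≤ q)]

lemma blockSlope_le (q : ℕ) : blockSlope q ≤ 1 / (q + 1) := by
  unfold blockSlope tangentSlope
  rw [div_le_div_iff₀ (by positivity) (by positivity)]
  nlinarith [(Nat.cast_nonneg q : (0 : ℝ) ≤ q)]

lemma tendsto_blockSlope : Tendsto blockSlope atTop (𝓝 0) :=
  squeeze_zero blockSlope_nonneg blockSlope_le tendsto_one_div_add_atTop_nhds_zero_nat

lemma vertexRe_mono : Monotone vertexRe :=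
  monotone_nat_of_le_succ fun k => by unfold vertexRe; split_ifs <;> omega

lemma vertex_re (k : ℕ) : (vertex k).re = vertexRe k := by simp [vertex]

lemma vertex_im (k : ℕ) : (vertex k).im = vertexSlope k * vertexRe k := by simp [vertex, mul_comm]

lemma vertexSlope_nonneg (k : ℕ) : 0 ≤ vertexSlope k := by
  unfold vertexSlope; split_ifs <;> simp [blockSlope_nonneg]

lemma vertexSlope_le (k : ℕ) : vertexSlope k ≤ blockSlope (k / 4) := by
  unfold vertexSlope; split_ifs <;> simp [blockSlope_nonneg]

lemma vertexSlope_succ_le (k : ℕ) : vertexSlope (k + 1) ≤ blockSlope (k / 4) := by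
  unfold vertexSlope
  split_ifs
  · rw [show (k + 1) / 4 = k / 4 by omega]
  · exact blockSlope_nonneg _

lemma vertex_four_mul (q : ℕ) : vertex (4 * q) = 3 * q + 1 := by
  simp [vertex, vertexRe, vertexSlope, show 4 * q / 4 = q by omega, show 4 * q % 4 = 0 by omega]

lemma vertex_four_mul_add_three (q : ℕ) : vertex (4 * q + 3) = 3 * q + 3 := by
  simp [vertex, vertexRe, vertexSlope, show (4 * q + 3) / 4 = q by omega,
    show (4 * q + 3) % 4 = 3 by omega]

lemma curve_natCast (k : ℕ) : curve k = vertex k := polygonalPath_natCast vertex k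

lemma vertexRe_le_curve_re {t : ℝ} (ht : 0 ≤ t) : (vertexRe ⌊t⌋₊ : ℝ) ≤ (curve t).re := by
  refine (convex_halfSpace_re_ge _).polygonalPath_mem vertex ht ?_ ?_ <;>
    simp only [Set.mem_ofPred_eq, vertex_re, Nat.cast_le]
  exacts [le_rfl, vertexRe_mono (Nat.le_succ _)]

lemma curve_re_le_vertexRe {t : ℝ} (ht : 0 ≤ t) : (curve t).re ≤ vertexRe (⌊t⌋₊ + 1) := by
  refine (convex_halfSpace_re_le _).polygonalPath_mem vertex ht ?_ ?_ <;>
    simp only [Set.mem_ofPred_eq, vertex_re, Nat.cast_le]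
  exacts [vertexRe_mono (Nat.le_succ _), le_rfl]

lemma curve_re_pos {t : ℝ} (ht : 0 ≤ t) : 0 < (curve t).re := by
  have : 1 ≤ vertexRe ⌊t⌋₊ := by unfold vertexRe; split_ifs <;> omega
  exact lt_of_lt_of_le (by exact_mod_cast this) (vertexRe_le_curve_re ht)

lemma curve_mem_cone {t : ℝ} (ht : 0 ≤ t) :
    0 ≤ (curve t).im ∧ (curve t).im ≤ blockSlope (⌊t⌋₊ / 4) * (curve t).re := by
  have hcone : ∀ k, vertexSlope k ≤ blockSlope (⌊t⌋₊ / 4) →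
      vertex k ∈ {z : ℂ | 0 ≤ z.im} ∩ {z | z.im ≤ blockSlope (⌊t⌋₊ / 4) * z.re} := fun k hk =>
    ⟨by simpa [vertex_im] using mul_nonneg (vertexSlope_nonneg k) (Nat.cast_nonneg _),
      by simpa [vertex_im, vertex_re] using
        mul_le_mul_of_nonneg_right hk (Nat.cast_nonneg (vertexRe k))⟩
  exact ((convex_halfSpace_im_ge 0).inter (convex_setOf_im_le_mul_re _)).polygonalPath_mem
    vertex ht (hcone _ (vertexSlope_le _)) (hcone _ (vertexSlope_succ_le _))

lemma tendsto_floor_div_four : Tendsto (fun t : ℝ => ⌊t⌋₊ / 4) atTop atTop :=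
  (Nat.tendsto_div_const_atTop four_ne_zero).comp tendsto_nat_floor_atTop

lemma tendsto_norm_curve : Tendsto (fun t => ‖curve t‖) atTop atTop := by
  refine tendsto_atTop_mono' _ ?_ (tendsto_natCast_atTop_atTop.comp tendsto_floor_div_four)
  filter_upwards [eventually_ge_atTop 0] with t ht
  have : ⌊t⌋₊ / 4 ≤ vertexRe ⌊t⌋₊ := by unfold vertexRe; omega
  calc ((⌊t⌋₊ / 4 : ℕ) : ℝ) ≤ vertexRe ⌊t⌋₊ := by exact_mod_cast this
    _ ≤ (curve t).re := vertexRe_le_curve_re ht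
    _ ≤ ‖curve t‖ := re_le_norm _

lemma tendsto_arg_curve : Tendsto (fun t => arg (curve t)) atTop (𝓝 0) := by
  refine squeeze_zero' ?_ ?_ (tendsto_blockSlope.comp tendsto_floor_div_four)
  all_goals filter_upwards [eventually_ge_atTop 0] with t ht
  · exact arg_nonneg_iff.2 (curve_mem_cone ht).1
  · exact arg_le_of_im_le_mul_re (curve_re_pos ht) (curve_mem_cone ht).1 (curve_mem_cone ht).2

/-- The curve stays outside the hyperbolic disc about `3q+2` through `3q+3`: before the `q`-th
block it has real part at most `3q+1`, on it it follows the tangent ray, and after it its real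
part is at least `3q+3`. -/
lemma rhoH_le_rhoH_curve (q : ℕ) {t : ℝ} (ht : 0 ≤ t) :
    rhoH (3 * q + 2 : ℝ) (3 * q + 3 : ℝ) ≤ rhoH (3 * q + 2 : ℝ) (curve t) := by
  have hq : (0 : ℝ) ≤ q := Nat.cast_nonneg q
  have hre := (curve_re_pos ht).le
  rcases lt_trichotomy ⌊t⌋₊ (4 * q + 1) with hk | hk | hk
  · have hle : (curve t).re ≤ 3 * q + 1 := by
      have := vertexRe_mono (show ⌊t⌋₊ + 1 ≤ 4 * q + 1 by omega)
      rw [show vertexRe (4 * q + 1) = 3 * q + 1 by simp [vertexRe]; omega] at this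
      exact (curve_re_le_vertexRe ht).trans (by exact_mod_cast this)
    refine rhoH_ofReal_le_rhoH (by positivity) (by positivity) hre
      (add_nonneg (mul_nonneg_of_nonpos_of_nonpos ?_ ?_) (by positivity))
    · linarith
    · nlinarith
  · have hray : ∀ k, k / 4 = q → k % 4 = 1 ∨ k % 4 = 2 →
        vertex k ∈ {z : ℂ | z.im = blockSlope q * z.re} := fun k hkq hk4 => by
      simp [vertex_im, vertex_re, vertexSlope, hk4, hkq]
    exact rhoH_ofReal_le_rhoH_of_im_eq (by positivity) (by positivity) hre
      ((convex_setOf_im_eq_mul_re _).polygonalPath_mem vertex ht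
        (hray _ (by omega) (by omega)) (hray _ (by omega) (by omega)))
  · have hge : 3 * q + 3 ≤ (curve t).re := by
      have := vertexRe_mono (show 4 * q + 2 ≤ ⌊t⌋₊ by omega)
      rw [show vertexRe (4 * q + 2) = 3 * q + 3 by simp [vertexRe]; omega] at this
      exact (by exact_mod_cast this : (3 * q + 3 : ℝ) ≤ _).trans (vertexRe_le_curve_re ht)
    refine rhoH_ofReal_le_rhoH (by positivity) (by positivity) hre
      (add_nonneg (mul_nonneg ?_ ?_) (by positivity))
    · linarith
    · nlinarith

noncomputable def projection (m : ℕ) : ℂ := if m % 3 = 1 then m + 2 else m + 1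

lemma projection_three_mul_add_one (k : ℕ) : projection (3 * k + 1) = projection (3 * k + 2) := by
  rw [projection, projection, if_pos (by omega), if_neg (by omega)]
  push_cast
  ring

lemma isProjH_curve_projection (m : ℕ) : IsProjH curve (m + 1) (projection m) := by
  have hself : ∀ k : ℕ, IsProjH curve (curve k) (curve k) := fun k =>
    isProjH_self (fun _ => curve_re_pos) (Nat.cast_nonneg k)
  obtain ⟨q, rfl | rfl | rfl⟩ : ∃ q, m = 3 * q ∨ m = 3 * q + 1 ∨ m = 3 * q + 2 :=
    ⟨m / 3, by omega⟩
  · rw [projection, if_neg (by omega)]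
    convert hself (4 * q) using 1 <;>
    · rw [curve_natCast, vertex_four_mul]
      push_cast
      ring
  · rw [projection, if_pos (by omega)]
    refine ⟨⟨(4 * q + 3 : ℕ), Nat.cast_nonneg _, ?_⟩, fun t ht => ?_⟩
    · rw [curve_natCast, vertex_four_mul_add_three]
      push_cast
      ring
    · have hx : ((3 * q + 1 : ℕ) : ℂ) + 1 = ((3 * q + 2 : ℝ) : ℂ) := by push_cast; ring
      have hp : ((3 * q + 1 : ℕ) : ℂ) + 2 = ((3 * q + 3 : ℝ) : ℂ) := by push_cast; ring
      rw [hx, hp]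
      exact dH_le_dH_of_rhoH_le (rhoH_le_rhoH_curve q ht)
        (rhoH_lt_one (by simp only [ofReal_re]; positivity) (curve_re_pos ht))
  · rw [projection, if_neg (by omega)]
    convert hself (4 * q + 3) using 1 <;>
    · rw [curve_natCast, vertex_four_mul_add_three]
      push_cast
      ring

end TranslationCounterexample

open TranslationCounterexample in
/-- for the parabolic map f(z) = z + 1 there is a continuous curve
γ landing at ∞ with arg γ(t) → 0 and projections π_n of f^n(1) onto γ with
π_{3n−2} = π_{3n−1} for all n ≥ 1; in particular {d_ℍ(1, π_n)} is not eventually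
strictly increasing. -/
theorem stmt17 (f : ℂ → ℂ) (hf : f = fun z : ℂ => z + 1) :
    ∃ γ : ℝ → ℂ, ContinuousOn γ (Set.Ici 0) ∧ (∀ t ≥ (0:ℝ), 0 < (γ t).re) ∧
      Tendsto (fun t : ℝ => ‖γ t‖) atTop atTop ∧
      Tendsto (fun t : ℝ => (γ t).arg) atTop (𝓝 0) ∧
      ∃ p : ℕ → ℂ, (∀ n : ℕ, IsProjH γ (f^[n] 1) (p n)) ∧
        (∀ n : ℕ, 1 ≤ n → p (3*n - 2) = p (3*n - 1)) ∧
        ¬ (∃ N : ℕ, ∀ n ≥ N, dH 1 (p n) < dH 1 (p (n+1))) := by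
  have hiter (m : ℕ) : f^[m] 1 = m + 1 := by simp [hf, add_comm]
  have hpair (n : ℕ) (hn : 1 ≤ n) : projection (3 * n - 2) = projection (3 * n - 1) := by
    obtain ⟨k, rfl⟩ := Nat.exists_eq_add_of_le' hn
    rw [show 3 * (k + 1) - 2 = 3 * k + 1 by omega, show 3 * (k + 1) - 1 = 3 * k + 2 by omega]
    exact projection_three_mul_add_one k
  refine ⟨curve, (continuous_polygonalPath vertex).continuousOn, fun t ht => curve_re_pos ht,
    tendsto_norm_curve, tendsto_arg_curve, projection,
    fun m => hiter m ▸ isProjH_curve_projection m, hpair, ?_⟩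
  rintro ⟨N, hN⟩
  have h := hN (3 * (N + 1) - 2) (by omega)
  rw [show 3 * (N + 1) - 2 + 1 = 3 * (N + 1) - 1 by omega, hpair (N + 1) le_add_self] at h
  exact lt_irrefl _ h
end
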